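/- arXiv:1512.06937 — 5 statements merged into one kernel-verified Lean document; each statement's English description precedes it below -/
import Mathlib

section
/- For all integers n ≥ r ≥ 2 and c ≤ r, we have n^r/r! - (c + (r-1)/2)·n^{r-1}/(r-1)! ≤ C(n-c, r) ≤ n^r/r! - (c + (r-1)/2)·n^{r-1}/(r-1)! + 4r^4·n^{r-2}. -/
/-!
With `tᵢ = (c + i) / n` we have `r! C(n - c, r) = ∏_{i<r} (n - c - i) = nʳ ∏_{i<r} (1 - tᵢ)`,
and the main term of the estimate is `nʳ / r! · (1 - T)` with
`T = ∑_{i<r} tᵢ = r (c + (r - 1) / 2) / n`. The inequalities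
`1 - T ≤ ∏ (1 - tᵢ) ≤ 1 - T + T² / 2` give both bounds, the error `nʳ / r! · T² / 2` being at
most `4 r⁴ n^(r-2)`. They hold when all `tᵢ ≤ 1`, and also when `c + r > n`: then the factor
with `c + i = n` vanishes and that term alone makes `T ≥ 1`.
-/

open Finset Nat

theorem Finset.one_sub_sum_le_prod_one_sub {ι R : Type*} [CommRing R] [LinearOrder R]
    [IsStrictOrderedRing R] {s : Finset ι} {t : ι → R} (h0 : ∀ i ∈ s, 0 ≤ t i)
    (h1 : ∀ i ∈ s, t i ≤ 1) :
    1 - ∑ i ∈ s, t i ≤ ∏ i ∈ s, (1 - t i) := by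
  classical
  induction s using Finset.induction_on with
  | empty => simp
  | insert j s hj ih =>
    simp only [mem_insert, forall_eq_or_imp] at h0 h1
    have hsum : 0 ≤ ∑ i ∈ s, t i := sum_nonneg h0.2
    rw [prod_insert hj, sum_insert hj]
    calc 1 - (t j + ∑ i ∈ s, t i) ≤ (1 - t j) * (1 - ∑ i ∈ s, t i) := by
          nlinarith [mul_nonneg h0.1 hsum]
      _ ≤ (1 - t j) * ∏ i ∈ s, (1 - t i) := by
          gcongr
          · linarith [h1.1]
          · exact ih h0.2 h1.2

theorem Finset.prod_one_sub_le_one_sub_sum_add_sq {ι K : Type*} [Field K] [LinearOrder K]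
    [IsStrictOrderedRing K] {s : Finset ι} {t : ι → K} (h0 : ∀ i ∈ s, 0 ≤ t i)
    (h1 : ∀ i ∈ s, t i ≤ 1) :
    ∏ i ∈ s, (1 - t i) ≤ 1 - ∑ i ∈ s, t i + (∑ i ∈ s, t i) ^ 2 / 2 := by
  classical
  induction s using Finset.induction_on with
  | empty => simp
  | insert j s hj ih =>
    simp only [mem_insert, forall_eq_or_imp] at h0 h1
    have hsum : 0 ≤ ∑ i ∈ s, t i := sum_nonneg h0.2
    rw [prod_insert hj, sum_insert hj]
    calc (1 - t j) * ∏ i ∈ s, (1 - t i)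
        ≤ (1 - t j) * (1 - ∑ i ∈ s, t i + (∑ i ∈ s, t i) ^ 2 / 2) := by
          gcongr
          · linarith [h1.1]
          · exact ih h0.2 h1.2
      _ ≤ 1 - (t j + ∑ i ∈ s, t i) + (t j + ∑ i ∈ s, t i) ^ 2 / 2 := by
          nlinarith [mul_nonneg h0.1 (sq_nonneg (∑ i ∈ s, t i)), sq_nonneg (t j)]

theorem Finset.sum_range_add_natCast {K : Type*} [Field K] [CharZero K] (c : K) (r : ℕ) :
    ∑ i ∈ range r, (c + i) = r * (c + (r - 1) / 2) := by
  induction r with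
  | zero => simp
  | succ r ih => rw [sum_range_succ, ih]; push_cast; ring

theorem Nat.cast_choose_mul_factorial {R : Type*} [CommRing R] (m r : ℕ) :
    (m.choose r : R) * r ! = ∏ i ∈ range r, ((m : R) - i) := by
  rw [← descPochhammer_eval_eq_prod_range, descPochhammer_eval_eq_descFactorial,
    descFactorial_eq_factorial_mul_choose]
  push_cast
  ring

theorem Nat.cast_choose_sub_eq_pow_div_factorial_mul_prod {K : Type*} [Field K] [CharZero K]
    {n c : ℕ} (hn : n ≠ 0) (hc : c ≤ n) (r : ℕ) :
    ((n - c).choose r : K) = n ^ r / r ! * ∏ i ∈ range r, (1 - (c + i : K) / n) := by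
  have hn' : (n : K) ≠ 0 := Nat.cast_ne_zero.2 hn
  rw [eq_comm, div_mul_eq_mul_div, div_eq_iff (Nat.cast_ne_zero.2 (factorial_ne_zero r)),
    cast_choose_mul_factorial, Nat.cast_sub hc]
  nth_rw 1 [← card_range r]
  rw [pow_card_mul_prod]
  refine prod_congr rfl fun i _ => ?_
  field_simp
  ring

theorem pow_div_factorial_sub_eq_mul_one_sub {K : Type*} [Field K] [CharZero K] {x : K}
    (hx : x ≠ 0) {r : ℕ} (hr : r ≠ 0) (b : K) :
    x ^ r / (r ! : K) - b / (r - 1)! * x ^ (r - 1) = x ^ r / r ! * (1 - r * b / x) := by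
  obtain ⟨k, rfl⟩ := exists_eq_succ_of_ne_zero hr
  rw [Nat.succ_sub_one, factorial_succ, pow_succ]
  push_cast
  field_simp

theorem pow_div_factorial_mul_div_sq_le {K : Type*} [Field K] [LinearOrder K]
    [IsStrictOrderedRing K] {x : K} (hx : 0 < x) {r : ℕ} (hr : 2 ≤ r) (y : K) :
    x ^ r / r ! * (y / x) ^ 2 ≤ y ^ 2 * x ^ (r - 2) := by
  obtain ⟨k, rfl⟩ := Nat.exists_eq_add_of_le' hr
  calc x ^ (k + 2) / (k + 2)! * (y / x) ^ 2 = y ^ 2 * x ^ k / (k + 2)! := by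
        field_simp; ring
    _ ≤ y ^ 2 * x ^ (k + 2 - 2) := by
        rw [Nat.add_sub_cancel]
        exact div_le_self (by positivity) (by exact_mod_cast factorial_pos _)

theorem prod_range_one_sub_div_bounds {K : Type*} [Field K] [LinearOrder K]
    [IsStrictOrderedRing K] (n c r : ℕ) (hn : 0 < n) (hc : c ≤ n) :
    1 - ∑ i ∈ range r, (c + i : K) / n ≤ ∏ i ∈ range r, (1 - (c + i : K) / n) ∧
      ∏ i ∈ range r, (1 - (c + i : K) / n) ≤
        1 - ∑ i ∈ range r, (c + i : K) / n + (∑ i ∈ range r, (c + i : K) / n) ^ 2 / 2 := by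
  have hn' : (0 : K) < n := by exact_mod_cast hn
  have h0 : ∀ i ∈ range r, 0 ≤ (c + i : K) / n := fun i _ => by positivity
  rcases le_or_gt (c + r) n with hcr | hcr
  · have h1 : ∀ i ∈ range r, (c + i : K) / n ≤ 1 := fun i hi => by
      rw [div_le_one hn']
      exact_mod_cast (show c + i ≤ n by grind)
    exact ⟨one_sub_sum_le_prod_one_sub h0 h1, prod_one_sub_le_one_sub_sum_add_sq h0 h1⟩
  · have hmem : n - c ∈ range r := mem_range.2 (by omega)
    have hterm : (c + (n - c : ℕ) : K) / n = 1 := by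
      rw [← Nat.cast_add, Nat.add_sub_cancel' hc, div_self hn'.ne']
    have hprod : ∏ i ∈ range r, (1 - (c + i : K) / n) = 0 :=
      prod_eq_zero hmem (by rw [hterm, sub_self])
    have hsum : 1 ≤ ∑ i ∈ range r, (c + i : K) / n :=
      hterm ▸ single_le_sum h0 hmem
    rw [hprod]
    constructor <;> nlinarith [sq_nonneg (∑ i ∈ range r, (c + i : K) / n - 1)]

theorem binomial_estimate (n r c : ℕ) (hrn : r ≤ n) (hr : 2 ≤ r) (hc : c ≤ r) :
    (n : ℚ) ^ r / r.factorial - ((c : ℚ) + ((r : ℚ) - 1) / 2) / (r - 1).factorial * (n : ℚ) ^ (r - 1)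
      ≤ ((n - c).choose r : ℚ) ∧
    ((n - c).choose r : ℚ)
      ≤ (n : ℚ) ^ r / r.factorial - ((c : ℚ) + ((r : ℚ) - 1) / 2) / (r - 1).factorial * (n : ℚ) ^ (r - 1)
        + 4 * (r : ℚ) ^ 4 * (n : ℚ) ^ (r - 2) := by
  have hn : (0 : ℚ) < n := by exact_mod_cast (show 0 < n by omega)
  set S : ℚ := r * (c + (r - 1) / 2) with hSdef
  have hS : S ^ 2 / 2 ≤ 4 * r ^ 4 := by
    have hr' : (2 : ℚ) ≤ r := by exact_mod_cast hr
    have hc' : (c : ℚ) ≤ r := by exact_mod_cast hc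
    have hS0 : 0 ≤ S := mul_nonneg (by positivity) (by linarith [c.cast_nonneg (α := ℚ)])
    have hS2 : S ≤ 2 * r ^ 2 := by rw [hSdef]; nlinarith
    nlinarith [mul_le_mul hS2 hS2 hS0 (by positivity)]
  have hT : ∑ i ∈ range r, (c + i : ℚ) / n = S / n := by
    rw [← sum_div, sum_range_add_natCast]
  obtain ⟨hlow, hup⟩ :=
    prod_range_one_sub_div_bounds (K := ℚ) n c r (show 0 < n by omega) (by omega)
  rw [hT] at hlow hup
  rw [cast_choose_sub_eq_pow_div_factorial_mul_prod (by omega) (by omega),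
    pow_div_factorial_sub_eq_mul_one_sub hn.ne' (by omega)]
  refine ⟨by gcongr, ?_⟩
  calc (n : ℚ) ^ r / r ! * ∏ i ∈ range r, (1 - (c + i : ℚ) / n)
      ≤ n ^ r / r ! * (1 - S / n + (S / n) ^ 2 / 2) := by gcongr
    _ = n ^ r / r ! * (1 - S / n) + n ^ r / r ! * (S / n) ^ 2 / 2 := by ring
    _ ≤ n ^ r / r ! * (1 - S / n) + S ^ 2 / 2 * n ^ (r - 2) := by
        have := pow_div_factorial_mul_div_sq_le hn hr S
        linarith
    _ ≤ n ^ r / r ! * (1 - S / n) + 4 * r ^ 4 * n ^ (r - 2) := by gcongr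
end

section
/- For any graph G on N vertices, the bandwidth of G satisfies B(G) ≤ N - ⌊β(G)/2⌋, where β(G) is the maximum size of an independent set in G. -/
/-! Relabel so that the first `k = ⌊β/2⌋` and the last `k` labels all belong to an independent
set `S` of size `β`. No edge joins two vertices of `S`, so every edge has an endpoint labelled
in `[k, N - k)`, and the labels of its endpoints differ by less than `N - k`. -/

open Finset

theorem Finset.exists_perm_forall_mem_of_card_le {α : Type*} [DecidableEq α] {s t : Finset α}
    (h : #t ≤ #s) : ∃ σ : Equiv.Perm α, ∀ x ∈ t, σ x ∈ s := by
  obtain ⟨s', hs's, hs'⟩ := s.exists_subset_card_eq h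
  let e : {x // x ∈ t} ≃ {x // x ∈ s'} := Finset.equivOfCardEq hs'.symm
  exact ⟨e.extendSubtype, fun x hx => hs's (e.extendSubtype_mem x hx)⟩

theorem Fin.card_filter_val_lt_or_le (n k : ℕ) :
    #{i : Fin n | i < k ∨ n - k ≤ i} ≤ 2 * k := by
  have hlow : #{i : Fin n | i < k} ≤ k := by
    rw [Fin.card_filter_val_lt]; exact min_le_right _ _
  have hhigh : #{i : Fin n | n - k ≤ (i : ℕ)} ≤ k := by
    have := card_filter_add_card_filter_not (s := (univ : Finset (Fin n)))
      (fun i : Fin n => (i : ℕ) < n - k)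
    simp only [not_lt, Fin.card_filter_val_lt, card_univ, Fintype.card_fin] at this
    omega
  calc #{i : Fin n | i < k ∨ n - k ≤ i}
      ≤ #{i : Fin n | i < k} + #{i : Fin n | n - k ≤ (i : ℕ)} := by
        rw [filter_or]; exact card_union_le _ _
    _ ≤ 2 * k := by omega

theorem SimpleGraph.IsIndepSet.natAbs_sub_lt_of_ends_mem {V : Type*} {G : SimpleGraph V}
    {s : Set V} (hs : G.IsIndepSet s) {n k : ℕ} (f : V → Fin n)
    (hf : ∀ v, (f v : ℕ) < k ∨ n - k ≤ f v → v ∈ s) {v w : V} (hvw : G.Adj v w) :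
    ((f v : ℤ) - f w).natAbs < n - k := by
  have hmid : ∀ u, u ∉ s → k ≤ f u ∧ (f u : ℕ) < n - k := fun u hu => by
    have := mt (hf u) hu
    omega
  have := (f v).isLt
  have := (f w).isLt
  by_cases hv : v ∈ s
  · have := hmid w fun hw => hs hv hw hvw.ne hvw
    omega
  · have := hmid v hv
    omega

theorem bandwidth_le_of_independent_general (N : ℕ) (G : SimpleGraph (Fin N))
    (S : Finset (Fin N)) (hS : ∀ v ∈ S, ∀ w ∈ S, ¬ G.Adj v w) :
    ∃ f : Fin N ≃ Fin N, ∀ v w : Fin N, G.Adj v w →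
      ((f v : ℤ) - (f w : ℤ)).natAbs ≤ N - S.card / 2 := by
  set k := S.card / 2
  obtain ⟨σ, hσ⟩ := Finset.exists_perm_forall_mem_of_card_le
    ((Fin.card_filter_val_lt_or_le N k).trans (Nat.mul_div_le S.card 2))
  have hS' : G.IsIndepSet S := fun v hv w hw _ => hS v hv w hw
  refine ⟨σ.symm, fun v w hvw => (hS'.natAbs_sub_lt_of_ends_mem σ.symm (fun u hu => ?_) hvw).le⟩
  simpa using hσ (σ.symm u) (by simpa using hu)

theorem bandwidth_le_of_independent (N : ℕ) (G : SimpleGraph (Fin N))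
    [DecidableRel G.Adj]
    (S : Finset (Fin N)) (hS : ∀ v ∈ S, ∀ w ∈ S, ¬ G.Adj v w)
    (hmax : ∀ T : Finset (Fin N), (∀ v ∈ T, ∀ w ∈ T, ¬ G.Adj v w) → T.card ≤ S.card) :
    ∃ f : Fin N ≃ Fin N, ∀ v w : Fin N, G.Adj v w →
      ((f v : ℤ) - (f w : ℤ)).natAbs ≤ N - S.card / 2 :=
  bandwidth_le_of_independent_general N G S hS
end

section
/- For n ≥ 2r, the bandwidth of the Kneser graph K(n,r) satisfies B(K(n,r)) ≤ C(n,r) - ⌊C(n-1,r-1)/2⌋. -/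
/-!
Any graph with an independent set `T` admits a labelling of bandwidth at most `N - ⌊|T|/2⌋`:
put `⌊|T|/2⌋` vertices of `T` on each end of the labelling. Every edge has an endpoint outside
`T`, hence a label at distance at least `⌊|T|/2⌋` from both ends. For the Kneser graph take for
`T` the star of all `r`-sets through a fixed point, of size `C(n-1, r-1)`.
-/

/-- The Kneser graph `K(n,r)`: vertices are `r`-subsets of `[n]`,
adjacent iff disjoint. -/
def kneser (n r : ℕ) : SimpleGraph {A : Finset (Fin n) // A.card = r} where
  Adj A B := Disjoint A.val B.val ∧ A ≠ B
  symm := by constructor; intro A B h; exact ⟨h.1.symm, h.2.symm⟩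
  loopless := by constructor; intro A h; exact h.2 rfl

open Finset

theorem Fintype.exists_equiv_mem_iff {α β : Type*} [Fintype α] [Fintype β]
    [DecidableEq α] [DecidableEq β] (h : Fintype.card α = Fintype.card β)
    {s : Finset α} {t : Finset β} (hst : #s = #t) :
    ∃ e : α ≃ β, ∀ a, e a ∈ t ↔ a ∈ s := by
  have e₁ : s ≃ t := Fintype.equivOfCardEq (by simpa using hst)
  have e₂ : {a // a ∉ s} ≃ {b // b ∉ t} :=
    Fintype.equivOfCardEq (by simp only [Fintype.card_subtype_compl, Fintype.card_coe, h, hst])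
  refine ⟨(Equiv.sumCompl (· ∈ s)).symm.trans ((e₁.sumCongr e₂).trans (Equiv.sumCompl (· ∈ t))),
    fun a => ?_⟩
  by_cases ha : a ∈ s
  · simp [Equiv.sumCompl_symm_apply_of_pos ha, ha]
  · simpa [Equiv.sumCompl_symm_apply_of_neg ha, ha] using (e₂ ⟨a, ha⟩).2

theorem Fin.card_filter_val_lt_or_sub_le {N k : ℕ} (hk : 2 * k ≤ N) :
    #{i : Fin N | (i : ℕ) < k ∨ N - k ≤ i} = 2 * k := by
  rw [filter_or, card_union_of_disjoint]
  · have hlow : #{i : Fin N | (i : ℕ) < k} = k := by rw [Fin.card_filter_val_lt]; omega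
    have hhigh : #{i : Fin N | N - k ≤ (i : ℕ)} = k := by
      simp_rw [← not_lt]
      rw [filter_not, card_sdiff_of_subset (filter_subset _ _), card_univ, Fintype.card_fin,
        Fin.card_filter_val_lt]
      omega
    omega
  · exact disjoint_filter.2 fun i _ h₁ h₂ => by omega

theorem SimpleGraph.exists_equiv_fin_natAbs_sub_le_of_isIndepSet {V : Type*} [Fintype V]
    [DecidableEq V] (G : SimpleGraph V) {T : Finset V} (hT : G.IsIndepSet T) {k : ℕ}
    (hk : 2 * k ≤ #T) :
    ∃ f : V ≃ Fin (Fintype.card V), ∀ v w, G.Adj v w →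
      ((f v : ℤ) - f w).natAbs ≤ Fintype.card V - k := by
  set N := Fintype.card V
  obtain ⟨S, hST, hS⟩ := exists_subset_card_eq hk
  have hkN : 2 * k ≤ N := hk.trans (card_le_univ T)
  obtain ⟨f, hf⟩ := Fintype.exists_equiv_mem_iff (Fintype.card_fin N).symm
    (hS.trans (Fin.card_filter_val_lt_or_sub_le hkN).symm)
  have hmid : ∀ v, v ∉ S → k ≤ (f v : ℕ) ∧ (f v : ℕ) + k < N := fun v hv => by
    simpa [← hf v] using hv
  have hfar : ∀ v w, v ∉ S → ((f v : ℤ) - f w).natAbs ≤ N - k := fun v w hv => by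
    have := hmid v hv; have := (f w).isLt; omega
  refine ⟨f, fun v w hvw => ?_⟩
  by_cases hv : v ∈ S
  · have hw : w ∉ S := fun hw => hT (hST hv) (hST hw) hvw.ne hvw
    rw [← Int.natAbs_neg, neg_sub]
    exact hfar w v hw
  · exact hfar v w hv

theorem kneser_isIndepSet_star {n r : ℕ} (a : Fin n) :
    (kneser n r).IsIndepSet
      (({v | a ∈ v.1} : Finset {A : Finset (Fin n) // A.card = r}) : Set _) :=
  fun _ hv _ hw _ hvw => disjoint_left.1 hvw.1 (mem_filter.1 hv).2 (mem_filter.1 hw).2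

theorem kneser_card_star {n r : ℕ} (hr : 1 ≤ r) (a : Fin n) :
    #({v | a ∈ v.1} : Finset {A : Finset (Fin n) // A.card = r}) = (n - 1).choose (r - 1) := by
  have hmap : ({v | a ∈ v.1} : Finset {A : Finset (Fin n) // A.card = r}).map
      (Function.Embedding.subtype _) = (univ.powersetCard r).filter ({a} ⊆ ·) := by
    ext A
    simp [and_comm]
  rw [← card_map, hmap, card_filter_powersetCard_subset _ _ _ (subset_univ _) (by simpa using hr)]
  simp

theorem bandwidth_kneser_trivial_upper_general (n r : ℕ) :
    ∃ f : {A : Finset (Fin n) // A.card = r} ≃ Fin (n.choose r),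
      ∀ v w, (kneser n r).Adj v w →
        ((f v : ℤ) - (f w : ℤ)).natAbs ≤ n.choose r - (n - 1).choose (r - 1) / 2 := by
  obtain ⟨T, hT, hTcard⟩ : ∃ T : Finset {A : Finset (Fin n) // A.card = r},
      (kneser n r).IsIndepSet T ∧ 2 * ((n - 1).choose (r - 1) / 2) ≤ #T := by
    by_cases hnr : n = 0 ∨ r = 0
    · have hzero : (n - 1).choose (r - 1) / 2 = 0 := by
        rcases hnr with rfl | rfl
        · rcases r with _ | _ | r <;> simp
        · simp
      exact ⟨∅, by simp, by simp [hzero]⟩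
    · obtain ⟨hn, hr⟩ := not_or.1 hnr
      exact ⟨_, kneser_isIndepSet_star ⟨0, by omega⟩,
        (Nat.mul_div_le _ 2).trans (kneser_card_star (by omega) _).ge⟩
  obtain ⟨f, hf⟩ := (kneser n r).exists_equiv_fin_natAbs_sub_le_of_isIndepSet hT hTcard
  have hcard : Fintype.card {A : Finset (Fin n) // A.card = r} = n.choose r := by
    simp [Fintype.card_finset_len]
  exact ⟨f.trans (finCongr hcard), by simpa [hcard] using hf⟩

theorem bandwidth_kneser_trivial_upper (n r : ℕ) (h : 2 * r ≤ n) :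
    ∃ f : {A : Finset (Fin n) // A.card = r} ≃ Fin (n.choose r),
      ∀ v w, (kneser n r).Adj v w →
        ((f v : ℤ) - (f w : ℤ)).natAbs ≤ n.choose r - (n - 1).choose (r - 1) / 2 :=
  bandwidth_kneser_trivial_upper_general n r
end

section
/- Let f: V(K(n,r)) → {1,...,C(n,r)} be a bijection and let F, G ⊆ {1,...,C(n,r)} with F = [x,y] an interval, G = [u, C(n,r)] a terminal interval, and suppose that for every v with f-label in F and every w with f-label in G, the r-sets v and w intersect (F and G are cross-intersecting via f). Then for every edge vw of K(n,r) with f(v) ∈ F or f(w) ∈ F, we have |f(v) - f(w)| ≤ max{y - 1, C(n,r) - (|G| + x)}. -/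
/-! An edge `vw` of `K(n,r)` joins disjoint sets, so if `f v` lies in `F` then cross-intersection
forces `f w` to lie below `G`, i.e. `f w + 1 < u`. The label difference is then at most
`y - 1` (when `f w ≤ f v`) or `(u - 2) - (x - 1)` (when `f v < f w`), and the latter is
`C(n,r) - (|G| + x)` with `|G| = C(n,r) - u + 1`. -/

theorem natAbs_sub_le_of_mem_Icc_of_lt {N u x y a b : ℕ} (ha : a + 1 ∈ Set.Icc x y)
    (hb : b + 1 < u) (hu : u ≤ N) :
    ((a : ℤ) - b).natAbs ≤ max (y - 1) (N - ((N - u + 1) + x)) := by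
  obtain ⟨hxa, hay⟩ := ha
  omega

theorem kneser_adj_label_lt_of_cross {n r x y u : ℕ}
    {f : {A : Finset (Fin n) // A.card = r} ≃ Fin (n.choose r)}
    (hcross : ∀ v w : {A : Finset (Fin n) // A.card = r},
      ((f v : ℕ) + 1) ∈ Set.Icc x y → ((f w : ℕ) + 1) ∈ Set.Icc u (n.choose r) →
      ¬ Disjoint v.val w.val)
    {v w : {A : Finset (Fin n) // A.card = r}} (hadj : (kneser n r).Adj v w)
    (hv : ((f v : ℕ) + 1) ∈ Set.Icc x y) :
    (f w : ℕ) + 1 < u := by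
  by_contra! hw
  exact hcross v w hv ⟨hw, (f w).isLt⟩ hadj.1

theorem blocked_intervals_general (n r x y u : ℕ)
    (f : {A : Finset (Fin n) // A.card = r} ≃ Fin (n.choose r))
    (hu : u ≤ n.choose r)
    (hcross : ∀ v w : {A : Finset (Fin n) // A.card = r},
      ((f v : ℕ) + 1) ∈ Set.Icc x y → ((f w : ℕ) + 1) ∈ Set.Icc u (n.choose r) →
      ¬ Disjoint v.val w.val) :
    ∀ v w : {A : Finset (Fin n) // A.card = r}, (kneser n r).Adj v w →
      (((f v : ℕ) + 1) ∈ Set.Icc x y ∨ ((f w : ℕ) + 1) ∈ Set.Icc x y) →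
      ((f v : ℤ) - (f w : ℤ)).natAbs ≤ max (y - 1) (n.choose r - ((n.choose r - u + 1) + x)) := by
  rintro v w hadj (hv | hw)
  · exact natAbs_sub_le_of_mem_Icc_of_lt hv (kneser_adj_label_lt_of_cross hcross hadj hv) hu
  · rw [← Int.natAbs_neg, neg_sub]
    exact natAbs_sub_le_of_mem_Icc_of_lt hw (kneser_adj_label_lt_of_cross hcross hadj.symm hw) hu

theorem blocked_intervals (n r x y u : ℕ)
    (f : {A : Finset (Fin n) // A.card = r} ≃ Fin (n.choose r))
    (hx : 1 ≤ x) (hxy : x ≤ y) (hu : u ≤ n.choose r)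
    (hcross : ∀ v w : {A : Finset (Fin n) // A.card = r},
      ((f v : ℕ) + 1) ∈ Set.Icc x y → ((f w : ℕ) + 1) ∈ Set.Icc u (n.choose r) →
      ¬ Disjoint v.val w.val) :
    ∀ v w : {A : Finset (Fin n) // A.card = r}, (kneser n r).Adj v w →
      (((f v : ℕ) + 1) ∈ Set.Icc x y ∨ ((f w : ℕ) + 1) ∈ Set.Icc x y) →
      ((f v : ℤ) - (f w : ℤ)).natAbs ≤ max (y - 1) (n.choose r - ((n.choose r - u + 1) + x)) :=
  blocked_intervals_general n r x y u f hu hcross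
end

section
/- Let u, v, w be distinct elements of [n] and let E, E' be two (r-1)-subsets of [n] with E ∩ E' = {w}, where u, v ∉ E ∪ E'. Then the number of r-subsets C of [n] with u, v ∈ C, C ∩ E ≠ ∅, and C ∩ E' ≠ ∅ is at most C(n-3,r-3) + (r-2)^2 · C(n-4,r-4). -/
/-!
Split the sets `C` according to whether `w ∈ C`. Those containing `w` contain `{u, v, w}`, and
there are at most `C(n-3, r-3)` of them. Those avoiding `w` meet both `E \ {w}` and `E' \ {w}`,
which are disjoint sets of size `r - 2`; choosing a point `a` of the first and `b` of the second
in `C`, the set `C` contains the four distinct points `u, v, a, b`, so there are at most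
`(r-2)^2 · C(n-4, r-4)` of them.
-/

open Finset

section

variable {α : Type*} [Fintype α] [DecidableEq α]

theorem card_filter_subset_card_eq_le (S : Finset α) (r : ℕ) :
    #(univ.filter fun C : Finset α => S ⊆ C ∧ #C = r)
      ≤ (Fintype.card α - #S).choose (r - #S) := by
  calc #(univ.filter fun C : Finset α => S ⊆ C ∧ #C = r)
      ≤ #((univ \ S).powersetCard (r - #S)) := by
        refine card_le_card_of_injOn (· \ S) ?_ ?_
        · intro C hC
          obtain ⟨hSC, hCr⟩ := (mem_filter.mp hC).2
          exact mem_powersetCard.mpr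
            ⟨sdiff_subset_sdiff (subset_univ C) le_rfl, by rw [card_sdiff_of_subset hSC, hCr]⟩
        · intro C₁ hC₁ C₂ hC₂ h
          have hS₁ := (mem_filter.mp hC₁).2.1
          have hS₂ := (mem_filter.mp hC₂).2.1
          rw [← sdiff_union_of_subset hS₁, ← sdiff_union_of_subset hS₂]
          exact congrArg (· ∪ S) h
    _ = (Fintype.card α - #S).choose (r - #S) := by
        rw [card_powersetCard, card_univ_sdiff]

theorem card_filter_mem_mem_meets_disjoint_le {u v : α} {A B : Finset α} (huv : u ≠ v)
    (hAB : Disjoint A B) (hu : u ∉ A ∪ B) (hv : v ∉ A ∪ B) (r : ℕ) :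
    #(univ.filter fun C : Finset α =>
        #C = r ∧ u ∈ C ∧ v ∈ C ∧ ¬Disjoint C A ∧ ¬Disjoint C B)
      ≤ #A * #B * (Fintype.card α - 4).choose (r - 4) := by
  have hcover : (univ.filter fun C : Finset α =>
      #C = r ∧ u ∈ C ∧ v ∈ C ∧ ¬Disjoint C A ∧ ¬Disjoint C B)
      ⊆ (A ×ˢ B).biUnion fun p => univ.filter fun C => {u, v, p.1, p.2} ⊆ C ∧ #C = r := by
    intro C hC
    obtain ⟨hCr, huC, hvC, hCA, hCB⟩ := (mem_filter.mp hC).2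
    obtain ⟨a, haC, haA⟩ := not_disjoint_iff.mp hCA
    obtain ⟨b, hbC, hbB⟩ := not_disjoint_iff.mp hCB
    refine mem_biUnion.mpr
      ⟨(a, b), mem_product.mpr ⟨haA, hbB⟩, mem_filter.mpr ⟨mem_univ C, ?_, hCr⟩⟩
    simp [insert_subset_iff, huC, hvC, haC, hbC]
  have hfour {a b : α} (ha : a ∈ A) (hb : b ∈ B) : #({u, v, a, b} : Finset α) = 4 := by
    have hab : a ≠ b := fun h => disjoint_left.mp hAB ha (h ▸ hb)
    have hua : u ≠ a := fun h => hu (mem_union_left B (h ▸ ha))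
    have hub : u ≠ b := fun h => hu (mem_union_right A (h ▸ hb))
    have hva : v ≠ a := fun h => hv (mem_union_left B (h ▸ ha))
    have hvb : v ≠ b := fun h => hv (mem_union_right A (h ▸ hb))
    rw [card_insert_of_notMem (by simp [huv, hua, hub]),
      card_insert_of_notMem (by simp [hva, hvb]), card_insert_of_notMem (by simp [hab]),
      card_singleton]
  calc _ ≤ #((A ×ˢ B).biUnion fun p =>
          univ.filter fun C => {u, v, p.1, p.2} ⊆ C ∧ #C = r) := card_le_card hcover
    _ ≤ ∑ p ∈ A ×ˢ B,
          #(univ.filter fun C : Finset α => {u, v, p.1, p.2} ⊆ C ∧ #C = r) :=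
        card_biUnion_le
    _ ≤ ∑ _p ∈ A ×ˢ B, (Fintype.card α - 4).choose (r - 4) := by
        refine sum_le_sum fun p hp => ?_
        obtain ⟨ha, hb⟩ := mem_product.mp hp
        simpa only [hfour ha hb] using card_filter_subset_card_eq_le {u, v, p.1, p.2} r
    _ = #A * #B * (Fintype.card α - 4).choose (r - 4) := by
        rw [sum_const, card_product, smul_eq_mul]

end

theorem count_uv_meeting_two_sets_sharing_w_general (n r : ℕ)
    (u v w : Fin n) (huv : u ≠ v) (huw : u ≠ w) (hvw : v ≠ w)
    (E E' : Finset (Fin n)) (hE : E.card = r - 1) (hE' : E'.card = r - 1)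
    (hinter : E ∩ E' = {w}) (hu : u ∉ E ∪ E') (hv : v ∉ E ∪ E') :
    (Finset.univ.filter (fun C : Finset (Fin n) =>
        C.card = r ∧ u ∈ C ∧ v ∈ C ∧ ¬ Disjoint C E ∧ ¬ Disjoint C E')).card
      ≤ (n - 3).choose (r - 3) + (r - 2) ^ 2 * (n - 4).choose (r - 4) := by
  obtain ⟨hwE, hwE'⟩ := mem_inter.mp (hinter.symm ▸ mem_singleton_self w : w ∈ E ∩ E')
  have hthree : #({u, v, w} : Finset (Fin n)) = 3 := by
    rw [card_insert_of_notMem (by simp [huv, huw]), card_insert_of_notMem (by simp [hvw]),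
      card_singleton]
  have hcontaining : #(univ.filter fun C : Finset (Fin n) => {u, v, w} ⊆ C ∧ #C = r)
      ≤ (n - 3).choose (r - 3) := by
    simpa only [hthree, Fintype.card_fin] using card_filter_subset_card_eq_le {u, v, w} r
  have herase_disjoint : Disjoint (E.erase w) (E'.erase w) := by
    rw [disjoint_iff_inter_eq_empty, erase_inter, inter_erase, hinter, erase_singleton,
      erase_empty]
  have herase_sub : E.erase w ∪ E'.erase w ⊆ E ∪ E' :=
    union_subset_union (erase_subset w E) (erase_subset w E')
  have havoiding := card_filter_mem_mem_meets_disjoint_le huv herase_disjoint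
    (fun h => hu (herase_sub h)) (fun h => hv (herase_sub h)) r
  have hsize : #(E.erase w) * #(E'.erase w) = (r - 2) ^ 2 := by
    rw [card_erase_of_mem hwE, card_erase_of_mem hwE', hE, hE', Nat.sub_sub, ← sq]
  rw [hsize, Fintype.card_fin] at havoiding
  rw [← card_filter_add_card_filter_not (p := fun C => w ∈ C), filter_filter, filter_filter]
  refine add_le_add ((card_le_card fun C hC => ?_).trans hcontaining)
    ((card_le_card fun C hC => ?_).trans havoiding)
  · obtain ⟨⟨hCr, huC, hvC, -⟩, hwC⟩ := (mem_filter.mp hC).2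
    exact mem_filter.mpr ⟨mem_univ C, by simp [insert_subset_iff, huC, hvC, hwC], hCr⟩
  · obtain ⟨⟨hCr, huC, hvC, hCE, hCE'⟩, hwC⟩ := (mem_filter.mp hC).2
    refine mem_filter.mpr ⟨mem_univ C, hCr, huC, hvC, ?_, ?_⟩ <;>
      rwa [← disjoint_erase_comm, erase_eq_of_notMem hwC]

theorem count_uv_meeting_two_sets_sharing_w (n r : ℕ) (hr : 4 ≤ r)
    (u v w : Fin n) (huv : u ≠ v) (huw : u ≠ w) (hvw : v ≠ w)
    (E E' : Finset (Fin n)) (hE : E.card = r - 1) (hE' : E'.card = r - 1)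
    (hinter : E ∩ E' = {w}) (hu : u ∉ E ∪ E') (hv : v ∉ E ∪ E') :
    (Finset.univ.filter (fun C : Finset (Fin n) =>
        C.card = r ∧ u ∈ C ∧ v ∈ C ∧ ¬ Disjoint C E ∧ ¬ Disjoint C E')).card
      ≤ (n - 3).choose (r - 3) + (r - 2) ^ 2 * (n - 4).choose (r - 4) :=
  count_uv_meeting_two_sets_sharing_w_general n r u v w huv huw hvw E E' hE hE' hinter hu hv
end
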